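/- Contraction of the proximal gradient operator under strong convexity and smoothness: if f is μ-strongly convex and L-smooth and 0 < β ≤ 1/L, then the map T(x) = prox_{βg}(x - β∇f(x)) is a contraction with ‖T(x) - T(y)‖ ≤ (1 - μβ)^{1/2}·‖x - y‖ for all x, y (in particular ‖T(x)-T(y)‖ ≤ max(|1-βμ|,|1-βL|)‖x-y‖). -/

import Mathlib

open Set InnerProductSpace
open scoped RealInnerProductSpace

section Aux
variable {E : Type*} [NormedAddCommGroup E] [InnerProductSpace ℝ E] [CompleteSpace E]

/-- Derivative of a function along a line, from gradients. -/
lemma aux_hasDerivAt_line {h : E → ℝ} {h' : E → E} (hh : ∀ z, HasGradientAt h (h' z) z)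
    (x v : E) (t : ℝ) :
    HasDerivAt (fun s : ℝ => h (x + s • v)) ⟪h' (x + t • v), v⟫_ℝ t := by
  have hc : HasDerivAt (fun s : ℝ => x + s • v) v t := by
    simpa using ((hasDerivAt_id t).smul_const v).const_add x
  have h2 := (hasGradientAt_iff_hasFDerivAt.mp (hh (x + t • v))).comp_hasDerivAt t hc
  simpa [InnerProductSpace.toDual_apply_apply, Function.comp_def] using h2

/-- First-order condition for convex differentiable functions. -/
lemma aux_first_order {h : E → ℝ} {h' : E → E} (hconv : ConvexOn ℝ univ h)
    (hh : ∀ z, HasGradientAt h (h' z) z) (x y : E) :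
    h x + ⟪h' x, y - x⟫_ℝ ≤ h y := by
  set ψ : ℝ → ℝ := fun t => h (x + t • (y - x)) with hψ
  have hψconv : ConvexOn ℝ univ ψ := by
    have h1 := hconv.comp_affineMap (AffineMap.lineMap x y : ℝ →ᵃ[ℝ] E)
    simp only [Set.preimage_univ] at h1
    have he : ψ = h ∘ (AffineMap.lineMap x y : ℝ →ᵃ[ℝ] E) := by
      funext t
      simp only [ψ, Function.comp_apply, AffineMap.lineMap_apply, vsub_eq_sub, vadd_eq_add]
      congr 1
      abel
    rw [he]
    exact h1
  have hd : HasDerivAt ψ ⟪h' x, y - x⟫_ℝ 0 := by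
    simpa using aux_hasDerivAt_line hh x (y - x) 0
  have := hψconv.le_slope_of_hasDerivAt (mem_univ (0:ℝ)) (mem_univ (1:ℝ)) one_pos hd
  rw [slope_def_field] at this
  simp [ψ] at this
  linarith

/-- Monotonicity of the gradient of a convex function. -/
lemma aux_grad_mono {h : E → ℝ} {h' : E → E} (hconv : ConvexOn ℝ univ h)
    (hh : ∀ z, HasGradientAt h (h' z) z) (x y : E) :
    0 ≤ ⟪h' x - h' y, x - y⟫_ℝ := by
  have h1 := aux_first_order hconv hh x y
  have h2 := aux_first_order hconv hh y x
  have e1 : ⟪h' x - h' y, x - y⟫_ℝ = -⟪h' x, y - x⟫_ℝ - ⟪h' y, x - y⟫_ℝ := by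
    rw [inner_sub_left]
    rw [show y - x = -(x - y) by abel, inner_neg_right]
    ring
  linarith

lemma aux_gradient_normsq (μ : ℝ) (x : E) :
    HasGradientAt (fun z : E => μ / 2 * ‖z‖ ^ 2) (μ • x) x := by
  rw [hasGradientAt_iff_hasFDerivAt]
  have h2 := ((hasFDerivAt_id x).inner ℝ (hasFDerivAt_id x)).const_mul (μ / 2)
  have he : (fun z : E => μ / 2 * ‖z‖ ^ 2) = fun z : E => μ / 2 * ⟪z, z⟫_ℝ := by
    funext z; rw [real_inner_self_eq_norm_sq]
  rw [he]
  refine h2.congr_fderiv ?_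
  ext v
  simp [InnerProductSpace.toDual_apply_apply, fderivInnerCLM_apply, real_inner_smul_left,
    real_inner_comm]
  ring

/-- Strong monotonicity of the gradient of a strongly convex function. -/
lemma aux_strong_mono {f : E → ℝ} {f' : E → E} (hf : ∀ z, HasGradientAt f (f' z) z)
    {μ : ℝ} (hstrong : StrongConvexOn univ μ f) (x y : E) :
    μ * ‖x - y‖ ^ 2 ≤ ⟪f' x - f' y, x - y⟫_ℝ := by
  have hconv : ConvexOn ℝ univ (fun z => f z - μ / 2 * ‖z‖ ^ 2) :=
    strongConvexOn_iff_convex.mp hstrong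
  have hg : ∀ z, HasGradientAt (fun z => f z - μ / 2 * ‖z‖ ^ 2) (f' z - μ • z) z := by
    intro z
    rw [hasGradientAt_iff_hasFDerivAt] at *
    have := (hasGradientAt_iff_hasFDerivAt.mp (hf z)).sub
      (hasGradientAt_iff_hasFDerivAt.mp (aux_gradient_normsq μ z))
    refine this.congr_fderiv ?_
    simp [map_sub]
  have := aux_grad_mono hconv hg x y
  have e : ⟪(f' x - μ • x) - (f' y - μ • y), x - y⟫_ℝ
      = ⟪f' x - f' y, x - y⟫_ℝ - μ * ‖x - y‖ ^ 2 := by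
    rw [show (f' x - μ • x) - (f' y - μ • y) = (f' x - f' y) - μ • (x - y) by
      rw [smul_sub]; abel]
    rw [inner_sub_left, real_inner_smul_left, real_inner_self_eq_norm_sq]
  rw [e] at this
  linarith

/-- Descent lemma. -/
lemma aux_descent {h : E → ℝ} {h' : E → E} (hh : ∀ z, HasGradientAt h (h' z) z)
    {L : ℝ} (hL : 0 < L) (hlip : ∀ a b, ‖h' a - h' b‖ ≤ L * ‖a - b‖) (a b : E) :
    h b ≤ h a + ⟪h' a, b - a⟫_ℝ + L / 2 * ‖b - a‖ ^ 2 := by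
  set v := b - a with hv
  set c : ℝ := ⟪h' a, v⟫_ℝ with hc
  set K : ℝ := L / 2 * ‖v‖ ^ 2 with hK
  set q : ℝ → ℝ := fun t => h (a + t • v) - t * c - K * t ^ 2 with hq
  have hq' : ∀ t : ℝ, HasDerivAt q (⟪h' (a + t • v), v⟫_ℝ - c - K * (2 * t)) t := by
    intro t
    have h3 : HasDerivAt (fun s : ℝ => K * s ^ 2) (K * (2 * t)) t := by
      simpa using (hasDerivAt_pow 2 t).const_mul K
    have h4 := ((aux_hasDerivAt_line hh a v t).sub ((hasDerivAt_id t).mul_const c)).sub h3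
    exact h4.congr_deriv (by ring)
  have hmono : AntitoneOn q (Icc (0:ℝ) 1) := by
    apply antitoneOn_of_deriv_nonpos (convex_Icc 0 1)
    · exact fun t _ => ((hq' t).differentiableAt).continuousAt.continuousWithinAt
    · exact fun t _ => ((hq' t).differentiableAt).differentiableWithinAt
    · intro t ht
      rw [interior_Icc, mem_Ioo] at ht
      rw [(hq' t).deriv]
      have h1 : ⟪h' (a + t • v) - h' a, v⟫_ℝ ≤ L * t * ‖v‖ ^ 2 := by
        calc ⟪h' (a + t • v) - h' a, v⟫_ℝ ≤ ‖h' (a + t • v) - h' a‖ * ‖v‖ :=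
              real_inner_le_norm _ _
          _ ≤ (L * ‖(a + t • v) - a‖) * ‖v‖ := by
              gcongr; exact hlip _ _
          _ = L * t * ‖v‖ ^ 2 := by
              rw [show (a + t • v) - a = t • v by abel, norm_smul,
                Real.norm_eq_abs, abs_of_pos ht.1]
              ring
      have h2 : ⟪h' (a + t • v), v⟫_ℝ - c = ⟪h' (a + t • v) - h' a, v⟫_ℝ := by
        rw [inner_sub_left]
      rw [hK] at *
      nlinarith [ht.1]
  have := hmono (Set.left_mem_Icc.mpr zero_le_one) (Set.right_mem_Icc.mpr zero_le_one)
    zero_le_one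
  simp [q, hK] at this
  have hb : a + v = b := by rw [hv]; abel
  rw [hb] at this
  linarith

/-- Cocoercivity of the gradient of a convex L-smooth function. -/
lemma aux_cocoercive {f : E → ℝ} {f' : E → E} (hf : ∀ z, HasGradientAt f (f' z) z)
    (hconv : ConvexOn ℝ univ f) {L : ℝ} (hL : 0 < L)
    (hlip : ∀ a b, ‖f' a - f' b‖ ≤ L * ‖a - b‖) (x y : E) :
    1 / L * ‖f' x - f' y‖ ^ 2 ≤ ⟪f' x - f' y, x - y⟫_ℝ := by
  have key : ∀ p q : E, f p - f q ≤ ⟪f' p, p - q⟫_ℝ - 1 / (2 * L) * ‖f' q - f' p‖ ^ 2 := by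
    intro p q
    set φ : E → ℝ := fun z => f z - ⟪f' p, z⟫_ℝ with hφ
    have hlin : ∀ z, HasGradientAt (fun z : E => ⟪f' p, z⟫_ℝ) (f' p) z := by
      intro z
      rw [hasGradientAt_iff_hasFDerivAt]
      exact (InnerProductSpace.toDual ℝ E (f' p)).hasFDerivAt
    have hφ' : ∀ z, HasGradientAt φ (f' z - f' p) z := by
      intro z
      rw [hasGradientAt_iff_hasFDerivAt]
      have := (hasGradientAt_iff_hasFDerivAt.mp (hf z)).sub
        (hasGradientAt_iff_hasFDerivAt.mp (hlin z))
      refine this.congr_fderiv ?_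
      simp [map_sub]
    have hφlip : ∀ u w, ‖(f' u - f' p) - (f' w - f' p)‖ ≤ L * ‖u - w‖ := by
      intro u w
      simpa using hlip u w
    set z := q - (1 / L) • (f' q - f' p) with hz
    have hmin : φ p ≤ φ z := by
      have h1 := aux_first_order hconv hf p z
      simp only [φ]
      rw [inner_sub_right] at h1
      linarith
    have hdesc := aux_descent hφ' hL hφlip q z
    have hz' : z - q = -((1 / L) • (f' q - f' p)) := by rw [hz]; abel
    rw [hz', inner_neg_right, real_inner_smul_right, norm_neg, norm_smul,
      real_inner_self_eq_norm_sq, Real.norm_eq_abs, abs_of_pos (by positivity : (0:ℝ) < 1/L),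
      mul_pow] at hdesc
    have harith : -(1 / L * ‖f' q - f' p‖ ^ 2) + L / 2 * ((1 / L) ^ 2 * ‖f' q - f' p‖ ^ 2)
        = -(1 / (2 * L) * ‖f' q - f' p‖ ^ 2) := by
      field_simp
      ring
    have hφp : φ p = f p - ⟪f' p, p⟫_ℝ := rfl
    have hφz : φ z ≤ f q - ⟪f' p, q⟫_ℝ - 1 / (2 * L) * ‖f' q - f' p‖ ^ 2 := by
      have hφq : φ q = f q - ⟪f' p, q⟫_ℝ := rfl
      rw [hφq] at hdesc
      linarith
    have hsub : ⟪f' p, p - q⟫_ℝ = ⟪f' p, p⟫_ℝ - ⟪f' p, q⟫_ℝ := inner_sub_right _ _ _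
    rw [hφp] at hmin
    clear_value φ z
    linarith
  have k1 := key x y
  have k2 := key y x
  have e1 : ⟪f' x, x - y⟫_ℝ + ⟪f' y, y - x⟫_ℝ = ⟪f' x - f' y, x - y⟫_ℝ := by
    rw [inner_sub_left, show y - x = -(x - y) by abel, inner_neg_right]
    ring
  have e2 : ‖f' y - f' x‖ = ‖f' x - f' y‖ := norm_sub_rev _ _
  rw [e2] at k1
  have harith2 : 1 / (2 * L) + 1 / (2 * L) = 1 / L := by
    field_simp
    norm_num
  nlinarith [k1, k2, e1, sq_nonneg ‖f' x - f' y‖]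

end Aux

/-- `p` is a proximal point of `g` with parameter `β` at `w`. -/
def IsProx {d : ℕ} (β : ℝ) (g : EuclideanSpace ℝ (Fin d) → ℝ)
    (w p : EuclideanSpace ℝ (Fin d)) : Prop :=
  IsMinOn (fun u => β * g u + ‖w - u‖ ^ 2 / 2) Set.univ p

section Prox
variable {d : ℕ}

/-- Variational inequality for the proximal operator. -/
lemma aux_prox_ineq {β : ℝ} (hβ : 0 < β) {g : EuclideanSpace ℝ (Fin d) → ℝ}
    (hgconv : ConvexOn ℝ Set.univ g) {w p : EuclideanSpace ℝ (Fin d)} (hp : IsProx β g w p)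
    (u : EuclideanSpace ℝ (Fin d)) :
    ⟪w - p, u - p⟫_ℝ ≤ β * (g u - g p) := by
  have hstep : ∀ t : ℝ, 0 < t → t ≤ 1 →
      ⟪w - p, u - p⟫_ℝ ≤ β * (g u - g p) + t / 2 * ‖u - p‖ ^ 2 := by
    intro t ht0 ht1
    have hmin := (isMinOn_iff.mp hp) (p + t • (u - p)) (mem_univ _)
    have hgc := hgconv.2 (mem_univ p) (mem_univ u)
      (show (0:ℝ) ≤ 1 - t by linarith) ht0.le (by ring)
    have hpt : (1 - t) • p + t • u = p + t • (u - p) := by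
      rw [smul_sub, sub_smul, one_smul]
      abel
    rw [hpt] at hgc
    have hnorm : ‖w - (p + t • (u - p))‖ ^ 2
        = ‖w - p‖ ^ 2 - 2 * t * ⟪w - p, u - p⟫_ℝ + t ^ 2 * ‖u - p‖ ^ 2 := by
      have he : w - (p + t • (u - p)) = (w - p) - t • (u - p) := by abel
      rw [he, norm_sub_sq_real, real_inner_smul_right, norm_smul, Real.norm_eq_abs,
        abs_of_pos ht0, mul_pow]
      ring
    rw [hnorm] at hmin
    have hgcβ : β * g (p + t • (u - p)) ≤ β * ((1 - t) * g p + t * g u) :=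
      mul_le_mul_of_nonneg_left hgc hβ.le
    have h5 : t * ⟪w - p, u - p⟫_ℝ ≤ t * (β * (g u - g p) + t / 2 * ‖u - p‖ ^ 2) := by
      nlinarith [hmin, hgcβ]
    exact (mul_le_mul_iff_right₀ ht0).mp h5
  apply le_of_forall_pos_le_add
  intro ε hε
  set N : ℝ := ‖u - p‖ ^ 2 with hN
  have hN0 : 0 ≤ N := sq_nonneg _
  set t : ℝ := min 1 (2 * ε / (N + 1)) with ht
  have ht0 : 0 < t := lt_min one_pos (by positivity)
  have ht1 : t ≤ 1 := min_le_left _ _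
  have h6 : t * (N + 1) ≤ 2 * ε :=
    (le_div_iff₀ (by positivity)).mp (min_le_right 1 (2 * ε / (N + 1)))
  have h7 : t / 2 * N ≤ ε := by nlinarith [h6, ht0]
  have := hstep t ht0 ht1
  linarith

/-- The proximal operator is nonexpansive. -/
lemma aux_prox_nonexp {β : ℝ} (hβ : 0 < β) {g : EuclideanSpace ℝ (Fin d) → ℝ}
    (hgconv : ConvexOn ℝ Set.univ g) {w₁ p₁ w₂ p₂ : EuclideanSpace ℝ (Fin d)}
    (h1 : IsProx β g w₁ p₁) (h2 : IsProx β g w₂ p₂) :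
    ‖p₁ - p₂‖ ≤ ‖w₁ - w₂‖ := by
  have i1 := aux_prox_ineq hβ hgconv h1 p₂
  have i2 := aux_prox_ineq hβ hgconv h2 p₁
  have hadd : ⟪w₁ - p₁, p₂ - p₁⟫_ℝ + ⟪w₂ - p₂, p₁ - p₂⟫_ℝ ≤ 0 := by linarith
  have e : ⟪w₁ - p₁, p₂ - p₁⟫_ℝ + ⟪w₂ - p₂, p₁ - p₂⟫_ℝ
      = -⟪w₁ - w₂, p₁ - p₂⟫_ℝ + ‖p₁ - p₂‖ ^ 2 := by
    have e1 : w₁ - p₁ = (w₁ - w₂) - (p₁ - p₂) + (w₂ - p₂) := by abel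
    have e2 : p₂ - p₁ = -(p₁ - p₂) := by abel
    rw [e1, e2]
    simp only [inner_add_left, inner_sub_left, inner_neg_right, real_inner_self_eq_norm_sq]
    rw [show ⟪p₁, p₁ - p₂⟫_ℝ - ⟪p₂, p₁ - p₂⟫_ℝ = ‖p₁ - p₂‖ ^ 2 from by
      rw [← inner_sub_left, real_inner_self_eq_norm_sq]]
    ring
  have hkey : ‖p₁ - p₂‖ ^ 2 ≤ ⟪w₁ - w₂, p₁ - p₂⟫_ℝ := by linarith
  have hcs : ⟪w₁ - w₂, p₁ - p₂⟫_ℝ ≤ ‖w₁ - w₂‖ * ‖p₁ - p₂‖ := real_inner_le_norm _ _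
  rcases eq_or_lt_of_le (norm_nonneg (p₁ - p₂)) with h0 | h0
  · rw [← h0]; exact norm_nonneg _
  · have : ‖p₁ - p₂‖ * ‖p₁ - p₂‖ ≤ ‖w₁ - w₂‖ * ‖p₁ - p₂‖ := by
      rw [← sq]; linarith
    exact le_of_mul_le_mul_right this h0

end Prox

/-- Contraction of the proximal gradient operator under strong convexity and smoothness:
`‖T(x) - T(y)‖ ≤ √(1 - μβ) ‖x - y‖` for `T(x) = prox_{βg}(x - β∇f(x))`, `0 < β ≤ 1/L`. -/
theorem stmt_19 {d : ℕ} (f g : EuclideanSpace ℝ (Fin d) → ℝ)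
    (f' : EuclideanSpace ℝ (Fin d) → EuclideanSpace ℝ (Fin d))
    (hf : ∀ x, HasGradientAt f (f' x) x)
    (μ L : ℝ) (hμ : 0 < μ) (hμL : μ ≤ L)
    (hstrong : StrongConvexOn Set.univ μ f)
    (hsmooth : ∀ x y, ‖f' x - f' y‖ ≤ L * ‖x - y‖)
    (hgconv : ConvexOn ℝ Set.univ g)
    (hgclosed : LowerSemicontinuous g)
    (β : ℝ) (hβ0 : 0 < β) (hβL : β ≤ 1 / L)
    (x y Tx Ty : EuclideanSpace ℝ (Fin d))
    (hTx : IsProx β g (x - β • f' x) Tx)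
    (hTy : IsProx β g (y - β • f' y) Ty) :
    ‖Tx - Ty‖ ≤ Real.sqrt (1 - μ * β) * ‖x - y‖ := by
  have hL : 0 < L := lt_of_lt_of_le hμ hμL
  have hfconv : ConvexOn ℝ Set.univ f := strongConvexOn_zero.mp (hstrong.mono hμ.le)
  have hne := aux_prox_nonexp hβ0 hgconv hTx hTy
  set G : EuclideanSpace ℝ (Fin d) := f' x - f' y with hG
  set D : EuclideanSpace ℝ (Fin d) := x - y with hD
  have hmono : μ * ‖D‖ ^ 2 ≤ ⟪G, D⟫_ℝ := aux_strong_mono hf hstrong x y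
  have hcoco : 1 / L * ‖G‖ ^ 2 ≤ ⟪G, D⟫_ℝ := aux_cocoercive hf hfconv hL hsmooth x y
  have hw : (x - β • f' x) - (y - β • f' y) = D - β • G := by
    rw [hD, hG, smul_sub]
    abel
  rw [hw] at hne
  have hsq : ‖D - β • G‖ ^ 2 = ‖D‖ ^ 2 - 2 * β * ⟪G, D⟫_ℝ + β ^ 2 * ‖G‖ ^ 2 := by
    rw [norm_sub_sq_real, real_inner_smul_right, norm_smul, Real.norm_eq_abs,
      abs_of_pos hβ0, mul_pow, real_inner_comm]
    ring
  have s1 : β ^ 2 * ‖G‖ ^ 2 ≤ β * ⟪G, D⟫_ℝ := by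
    have a1 : β * (1 / L * ‖G‖ ^ 2) ≤ β * ⟪G, D⟫_ℝ := mul_le_mul_of_nonneg_left hcoco hβ0.le
    have a2 : β * β ≤ β * (1 / L) := mul_le_mul_of_nonneg_left hβL hβ0.le
    nlinarith [sq_nonneg ‖G‖]
  have s2 : β * (μ * ‖D‖ ^ 2) ≤ β * ⟪G, D⟫_ℝ := mul_le_mul_of_nonneg_left hmono hβ0.le
  have hcontract : ‖D - β • G‖ ^ 2 ≤ (1 - μ * β) * ‖D‖ ^ 2 := by
    rw [hsq]
    nlinarith [s1, s2]
  have h1mb : 0 ≤ 1 - μ * β := by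
    have : μ * β ≤ L * (1 / L) := mul_le_mul hμL hβL hβ0.le hL.le
    rw [mul_one_div_cancel hL.ne'] at this
    linarith
  calc ‖Tx - Ty‖ ≤ ‖D - β • G‖ := hne
    _ = Real.sqrt (‖D - β • G‖ ^ 2) := (Real.sqrt_sq (norm_nonneg _)).symm
    _ ≤ Real.sqrt ((1 - μ * β) * ‖D‖ ^ 2) := Real.sqrt_le_sqrt hcontract
    _ = Real.sqrt (1 - μ * β) * ‖D‖ := by
        rw [Real.sqrt_mul h1mb, Real.sqrt_sq (norm_nonneg _)]
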